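/- With the same setup, the splitting s_{G_t} := G_t π* g_t : T → E satisfies d/dt|_{t=0} s_{G_t} = π* ∘ k, where k is viewed as a map T → T*. -/
import Mathlib


attribute [local instance] Matrix.linftyOpNormedRing Matrix.linftyOpNormedSpace
  Matrix.linftyOpNormedAddCommGroup

attribute [local instance] Matrix.linftyOpNormedAlgebra

/-- With the same setup as Statement 6, the splitting
`s_{G_t} := G_t π* g_t : T → E` satisfies `d/dt|₀ s_{G_t} = π* ∘ k`, where `π*` is
the inclusion `T* → E = T ⊕ T*`. -/
theorem statement7 {n : Type*} [Fintype n] [DecidableEq n]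
    (g ginv h k : Matrix n n ℝ)
    (hg1 : g * ginv = 1) (hg2 : ginv * g = 1)
    (hhsymm : h.transpose = h) (hkskew : k.transpose = -k)
    (G : ℝ → Matrix (n ⊕ n) (n ⊕ n) ℝ)
    (V : Matrix (n ⊕ n) (n ⊕ n) ℝ)
    (hV : V = (1/2 : ℝ) •
      Matrix.fromBlocks (-(ginv * h)) (-(ginv * k * ginv)) k (h * ginv))
    (hG0 : G 0 = Matrix.fromBlocks 0 ginv g 0)
    (hGder : HasDerivAt G (V * G 0 - G 0 * V) 0)
    (gt : ℝ → Matrix n n ℝ)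
    (hgt : ∀ t : ℝ, gt t * (G t).toBlocks₁₂ = 1 ∧ (G t).toBlocks₁₂ * gt t = 1)
    (hgt0 : gt 0 = g)
    (hgtder : HasDerivAt gt h 0)
    (πs : Matrix (n ⊕ n) n ℝ)
    (hπs : πs = Matrix.of (Sum.elim (fun (_ : n) (_ : n) => (0 : ℝ))
      (fun i j => if i = j then (1 : ℝ) else 0))) :
    HasDerivAt (fun t : ℝ => G t * πs * gt t) (πs * k) 0 := by
  -- linear map `M ↦ fromBlocks 0 0 0 M`
  let L : Matrix n n ℝ →ₗ[ℝ] Matrix (n ⊕ n) (n ⊕ n) ℝ :=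
    { toFun := fun M => Matrix.fromBlocks 0 0 0 M
      map_add' := fun a b => by
        ext i j
        cases i <;> cases j <;> simp [Matrix.fromBlocks]
      map_smul' := fun c a => by
        ext i j
        cases i <;> cases j <;> simp [Matrix.fromBlocks] }
  have hB : HasDerivAt (fun t => (Matrix.fromBlocks 0 0 0 (gt t) :
      Matrix (n ⊕ n) (n ⊕ n) ℝ)) (Matrix.fromBlocks 0 0 0 h) 0 :=
    (L.toContinuousLinearMap.hasFDerivAt.comp_hasDerivAt 0 hgtder :)
  have hF := hGder.mul hB
  -- linear map `M ↦ M * πs`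
  let R : Matrix (n ⊕ n) (n ⊕ n) ℝ →ₗ[ℝ] Matrix (n ⊕ n) n ℝ :=
    { toFun := fun M => M * πs
      map_add' := fun a b => Matrix.add_mul a b πs
      map_smul' := fun c a => Matrix.smul_mul c a πs }
  have hL : HasDerivAt (fun t => (G t * Matrix.fromBlocks 0 0 0 (gt t)) * πs)
      (((V * G 0 - G 0 * V) * Matrix.fromBlocks 0 0 0 (gt 0)
        + G 0 * Matrix.fromBlocks 0 0 0 h) * πs) 0 :=
    (R.toContinuousLinearMap.hasFDerivAt.comp_hasDerivAt 0 hF :)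
  have fb_sub : ∀ (A B C D A' B' C' D' : Matrix n n ℝ),
      Matrix.fromBlocks A B C D - Matrix.fromBlocks A' B' C' D'
        = Matrix.fromBlocks (A - A') (B - B') (C - C') (D - D') := by
    intros A B C D A' B' C' D'
    ext i j
    cases i <;> cases j <;> simp [Matrix.fromBlocks]
  -- the square matrix is `fromBlocks 0 0 0 k`
  have hX : (V * G 0 - G 0 * V) * Matrix.fromBlocks 0 0 0 (gt 0)
      + G 0 * Matrix.fromBlocks 0 0 0 h
      = (Matrix.fromBlocks 0 0 0 k : Matrix (n ⊕ n) (n ⊕ n) ℝ) := by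
    rw [hV, hG0, hgt0]
    rw [Matrix.smul_mul, Matrix.mul_smul, ← smul_sub, Matrix.fromBlocks_multiply,
      Matrix.fromBlocks_multiply, fb_sub, Matrix.smul_mul, Matrix.fromBlocks_multiply,
      Matrix.fromBlocks_multiply, Matrix.fromBlocks_smul]
    simp only [Matrix.fromBlocks_add]
    rw [Matrix.fromBlocks_inj]
    refine ⟨by simp, ?_, by simp, ?_⟩
    · simp only [Matrix.mul_zero, Matrix.zero_mul, add_zero, zero_add, zero_sub, sub_zero,
        Matrix.sub_mul, Matrix.neg_mul, Matrix.mul_assoc, hg2, Matrix.mul_one, smul_zero]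
      module
    · simp only [Matrix.mul_zero, Matrix.zero_mul, add_zero, zero_add, zero_sub, sub_zero,
        Matrix.sub_mul, Matrix.neg_mul, Matrix.mul_neg, Matrix.mul_assoc, hg2,
        Matrix.mul_one, smul_zero]
      rw [← Matrix.mul_assoc, hg1, Matrix.one_mul]
      module
  rw [hX] at hL
  -- identify functions and derivative values
  have hπmul : ∀ A : Matrix n n ℝ,
      (Matrix.fromBlocks 0 0 0 A : Matrix (n ⊕ n) (n ⊕ n) ℝ) * πs = πs * A := by
    intro A
    ext i j
    cases i <;>
      simp [hπs, Matrix.mul_apply, Fintype.sum_sum_type, Matrix.fromBlocks]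
  have hfun : (fun t => (G t * Matrix.fromBlocks 0 0 0 (gt t)) * πs)
      = fun t : ℝ => G t * πs * gt t := by
    funext t
    rw [Matrix.mul_assoc, hπmul, ← Matrix.mul_assoc]
  rw [hfun, hπmul] at hL
  exact hL
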